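/- For every n ≥ 0, the polynomial F_{n+1}(x,y) is divisible by y in ℤ[x,y]; write μ_n := F_{n+1}(x,y)/y. Let T_n ∈ ℤ[x,y][z] be the monic polynomials defined by T_0 = 1, T_1 = z − (x+y), and T_n = (z − (nx + y + n − 1))·T_{n−1} − (n−1)·x·(y+n−1)·T_{n−2} for n ≥ 2. Let L be the moment functional of the sequence (μ_n). Then L(T_m · T_n) = 0 whenever m ≠ n, and L(T_n²) = n! · x^n · ∏_{j=1}^{n}(y+j) for every n ≥ 0. In particular the polynomials F_{n+1}(x,y)/y are the moments of the orthogonal polynomial family (T_n). -/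

import Mathlib

/-- Number of excedances of a permutation. -/
def exc {n : ℕ} (π : Equiv.Perm (Fin n)) : ℕ :=
  (Finset.univ.filter fun i => i < π i).card

/-- Number of cycles of a permutation, counting fixed points as cycles. -/
def cyc {n : ℕ} (π : Equiv.Perm (Fin n)) : ℕ :=
  Multiset.card π.cycleType + (Finset.univ.filter fun i => π i = i).card

/-- The Savage–Viswanathan polynomial `F_n(x,y) ∈ ℤ[x,y]`, with `x = X 0`, `y = X 1`. -/
noncomputable def SV (n : ℕ) : MvPolynomial (Fin 2) ℤ :=
  ∑ π : Equiv.Perm (Fin n), MvPolynomial.X 0 ^ exc π * MvPolynomial.X 1 ^ cyc π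

set_option linter.unusedSectionVars false

open Equiv Equiv.Perm Finset


variable {m : ℕ}

-- π for p = q.succ
noncomputable def pS (e : Perm (Fin m)) (q : Fin m) : Perm (Fin (m+1)) :=
  Equiv.Perm.decomposeFin.symm (q.succ, e)

lemma pS_zero (e : Perm (Fin m)) (q : Fin m) : pS e q 0 = q.succ :=
  Equiv.Perm.decomposeFin_symm_apply_zero _ _

lemma pS_succ (e : Perm (Fin m)) (q : Fin m) (i : Fin m) :
    pS e q i.succ = if e i = q then 0 else (e i).succ := by
  rw [pS, Equiv.Perm.decomposeFin_symm_apply_succ]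
  by_cases h : e i = q
  · simp [h, Equiv.swap_apply_right]
  · rw [Equiv.swap_apply_of_ne_of_ne (Fin.succ_ne_zero _) (fun hc => h (Fin.succ_injective _ hc)),
      if_neg h]

def proj (q : Fin m) : Fin (m+1) → Fin m := Fin.cases q id

@[simp] lemma proj_zero (q : Fin m) : proj q 0 = q := rfl
@[simp] lemma proj_succ (q i : Fin m) : proj q i.succ = i := rfl

lemma proj_pS (e : Perm (Fin m)) (q : Fin m) (z : Fin (m+1)) (hz : z ≠ 0) :
    proj q (pS e q z) = e (proj q z) := by
  induction z using Fin.cases with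
  | zero => exact absurd rfl hz
  | succ i =>
    rw [pS_succ]
    by_cases h : e i = q
    · simp [h]
    · simp [h]

lemma traj_fwd (e : Perm (Fin m)) (q : Fin m) (k : ℕ) (z : Fin (m+1)) :
    ∃ l : ℕ, (e ^ l) (proj q z) = proj q ((pS e q ^ k) z) := by
  induction k with
  | zero => exact ⟨0, rfl⟩
  | succ k ih =>
    obtain ⟨l, hl⟩ := ih
    have hstep : (pS e q ^ (k+1)) z = pS e q ((pS e q ^ k) z) := by
      rw [pow_succ', Equiv.Perm.mul_apply]
    by_cases hw : (pS e q ^ k) z = 0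
    · refine ⟨l, ?_⟩
      rw [hstep, hw, pS_zero, proj_succ, hl, hw, proj_zero]
    · refine ⟨l + 1, ?_⟩
      rw [hstep, proj_pS e q _ hw, pow_succ', Equiv.Perm.mul_apply, hl]

lemma traj_bwd (e : Perm (Fin m)) (q : Fin m) (l : ℕ) (i : Fin m) :
    ∃ k : ℕ, (pS e q ^ k) i.succ = ((e ^ l) i).succ := by
  induction l with
  | zero => exact ⟨0, rfl⟩
  | succ l ih =>
    obtain ⟨k, hk⟩ := ih
    set s := (e ^ l) i with hs
    have hgoal : (e ^ (l+1)) i = e s := by rw [pow_succ', Equiv.Perm.mul_apply]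
    by_cases h : e s = q
    · refine ⟨k + 2, ?_⟩
      have h1 : (pS e q ^ (k+1)) i.succ = pS e q (((e ^ l) i).succ) := by
        rw [pow_succ', Equiv.Perm.mul_apply, hk]
      rw [hgoal]
      calc (pS e q ^ (k+2)) i.succ = pS e q ((pS e q ^ (k+1)) i.succ) := by
            rw [pow_succ', Equiv.Perm.mul_apply]
        _ = pS e q 0 := by rw [h1, pS_succ, if_pos h]
        _ = (e s).succ := by rw [pS_zero, h]
    · refine ⟨k + 1, ?_⟩
      rw [hgoal]
      calc (pS e q ^ (k+1)) i.succ = pS e q (((e ^ l) i).succ) := by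
            rw [pow_succ', Equiv.Perm.mul_apply, hk]
        _ = (e s).succ := by rw [pS_succ, if_neg h]

lemma sc_nat {α : Type*} [Fintype α] (f : Perm α) {a b : α} (h : f.SameCycle a b) :
    ∃ k : ℕ, (f ^ k) a = b := by
  obtain ⟨k, _, hk⟩ := Equiv.Perm.SameCycle.exists_pow_eq' h
  exact ⟨k, hk⟩

lemma sc_of_pow {α : Type*} (f : Perm α) {a b : α} (k : ℕ) (h : (f ^ k) a = b) :
    f.SameCycle a b := ⟨(k : ℤ), by rw [zpow_natCast]; exact h⟩

lemma T1 (e : Perm (Fin m)) (q : Fin m) (i j : Fin m) :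
    (pS e q).SameCycle i.succ j.succ ↔ e.SameCycle i j := by
  constructor
  · intro h
    obtain ⟨k, hk⟩ := sc_nat _ h
    obtain ⟨l, hl⟩ := traj_fwd e q k i.succ
    rw [hk] at hl
    exact sc_of_pow _ l (by simpa using hl)
  · intro h
    obtain ⟨l, hl⟩ := sc_nat _ h
    obtain ⟨k, hk⟩ := traj_bwd e q l i
    exact sc_of_pow _ k (by rw [hk, hl])

lemma T2 (e : Perm (Fin m)) (q : Fin m) (j : Fin m) :
    (pS e q).SameCycle 0 j.succ ↔ e.SameCycle q j := by
  constructor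
  · intro h
    obtain ⟨k, hk⟩ := sc_nat _ h
    obtain ⟨l, hl⟩ := traj_fwd e q k 0
    rw [hk] at hl
    exact sc_of_pow _ l (by simpa using hl)
  · intro h
    obtain ⟨l, hl⟩ := sc_nat _ h
    obtain ⟨k, hk⟩ := traj_bwd e q l q
    have h0 : (pS e q ^ (k+1)) 0 = j.succ := by
      rw [pow_succ, Equiv.Perm.mul_apply, pS_zero, hk, hl]
    exact sc_of_pow _ (k+1) h0

-- p = 0 case
noncomputable def p0 (e : Perm (Fin m)) : Perm (Fin (m+1)) :=
  Equiv.Perm.decomposeFin.symm (0, e)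

lemma p0_zero (e : Perm (Fin m)) : p0 e 0 = 0 :=
  Equiv.Perm.decomposeFin_symm_apply_zero _ _

lemma p0_succ (e : Perm (Fin m)) (i : Fin m) : p0 e i.succ = (e i).succ := by
  rw [p0, Equiv.Perm.decomposeFin_symm_apply_succ]
  simp

lemma p0_pow_succ (e : Perm (Fin m)) (k : ℕ) (i : Fin m) :
    (p0 e ^ k) i.succ = ((e ^ k) i).succ := by
  induction k with
  | zero => rfl
  | succ k ih =>
    rw [pow_succ', pow_succ', Equiv.Perm.mul_apply, Equiv.Perm.mul_apply, ih, p0_succ]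

lemma T1₀ (e : Perm (Fin m)) (i j : Fin m) :
    (p0 e).SameCycle i.succ j.succ ↔ e.SameCycle i j := by
  constructor
  · intro h
    obtain ⟨k, hk⟩ := sc_nat _ h
    rw [p0_pow_succ] at hk
    exact sc_of_pow _ k (Fin.succ_injective _ hk)
  · intro h
    obtain ⟨l, hl⟩ := sc_nat _ h
    exact sc_of_pow _ l (by rw [p0_pow_succ, hl])


lemma sameCycle_fixed {n : ℕ} {π : Equiv.Perm (Fin n)} {i j : Fin n} (hfix : π i = i)
    (h : π.SameCycle i j) : j = i := by
  obtain ⟨k, hk⟩ := h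
  rw [← hk]
  exact (Function.IsFixedPt.perm_zpow hfix k)

lemma cyc_eq_card_min {n : ℕ} (π : Equiv.Perm (Fin n)) :
    cyc π = (Finset.univ.filter fun i => ∀ j, π.SameCycle i j → i ≤ j).card := by
  classical
  set S := Finset.univ.filter fun i => ∀ j, π.SameCycle i j → i ≤ j with hS
  have hsplit : (S.filter fun i => π i = i).card + (S.filter fun i => ¬ π i = i).card = S.card :=
    Finset.card_filter_add_card_filter_not _
  have hfix : S.filter (fun i => π i = i) = Finset.univ.filter fun i => π i = i := by
    ext i
    simp only [hS, Finset.mem_filter, Finset.filter_filter, Finset.mem_univ, true_and]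
    refine ⟨fun h => h.2, fun h => ⟨fun j hj => ?_, h⟩⟩
    rw [sameCycle_fixed h hj]
  have hne : ∀ c ∈ π.cycleFactorsFinset, c.support.Nonempty := fun c hc =>
    (Equiv.Perm.mem_cycleFactorsFinset_iff.mp hc).1.nonempty_support
  have hsupp : ∀ c (hc : c ∈ π.cycleFactorsFinset), c.support.min' (hne c hc) ∈ c.support :=
    fun c hc => Finset.min'_mem _ _
  -- minimum of a cycle factor is a non-fixed same-cycle-minimal point
  have key : ∀ c (hc : c ∈ π.cycleFactorsFinset), ∀ i ∈ c.support,
      (π.SameCycle i · ) = (· ∈ c.support) := by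
    intro c hc i hi
    funext j
    have h1 : c = π.cycleOf i := Equiv.Perm.cycle_is_cycleOf hi hc
    have h2 : i ∈ π.support := Equiv.Perm.mem_cycleFactorsFinset_support_le hc hi
    ext
    rw [h1, Equiv.Perm.mem_support_cycleOf_iff]
    exact ⟨fun h => ⟨h, h2⟩, fun h => h.1⟩
  have hcyc : (S.filter fun i => ¬ π i = i).card = π.cycleFactorsFinset.card := by
    symm
    apply Finset.card_bij (fun c hc => c.support.min' (hne c hc))
    · intro c hc
      have hm := hsupp c hc
      have hmemπ : c.support.min' (hne c hc) ∈ π.support :=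
        Equiv.Perm.mem_cycleFactorsFinset_support_le hc hm
      simp only [hS, Finset.mem_filter, Finset.filter_filter, Finset.mem_univ, true_and]
      constructor
      · intro j hj
        have := congrFun (key c hc _ hm) j
        rw [this] at hj
        exact Finset.min'_le _ _ hj
      · exact Equiv.Perm.mem_support.mp hmemπ
    · intro c₁ h₁ c₂ h₂ heq
      by_contra hne12
      have hd := (Equiv.Perm.cycleFactorsFinset_pairwise_disjoint π) h₁ h₂ hne12
      have := Equiv.Perm.Disjoint.disjoint_support hd
      exact Finset.disjoint_left.mp this (hsupp c₁ h₁) (heq ▸ hsupp c₂ h₂)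
    · intro i hi
      simp only [hS, Finset.mem_filter, Finset.filter_filter, Finset.mem_univ, true_and] at hi
      obtain ⟨hmin, hnf⟩ := hi
      have hiS : i ∈ π.support := Equiv.Perm.mem_support.mpr hnf
      refine ⟨π.cycleOf i, Equiv.Perm.cycleOf_mem_cycleFactorsFinset_iff.mpr hiS, ?_⟩
      have hic : i ∈ (π.cycleOf i).support := by
        rw [Equiv.Perm.mem_support_cycleOf_iff]
        exact ⟨Equiv.Perm.SameCycle.refl _ _, hiS⟩
      apply le_antisymm
      · exact Finset.min'_le _ _ hic
      · apply Finset.le_min'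
        intro j hj
        rw [Equiv.Perm.mem_support_cycleOf_iff] at hj
        exact hmin j hj.1
  rw [cyc, Equiv.Perm.cycleType, Multiset.card_map, ← hsplit, hfix, hcyc]
  have : Multiset.card π.cycleFactorsFinset.val = π.cycleFactorsFinset.card := rfl
  omega

lemma card_filter_succ (p : Fin (m+1) → Prop) [DecidablePred p] :
    (Finset.univ.filter p).card
      = (if p 0 then 1 else 0) + (Finset.univ.filter fun i : Fin m => p i.succ).card := by
  rw [Finset.card_filter, Fin.sum_univ_succ, Finset.card_filter]

lemma cyc0 (e : Perm (Fin m)) : cyc (p0 e) = cyc e + 1 := by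
  classical
  rw [cyc_eq_card_min, cyc_eq_card_min, card_filter_succ]
  rw [if_pos (fun j _ => Fin.zero_le j)]
  have hset : (Finset.univ.filter fun i : Fin m => ∀ j, (p0 e).SameCycle i.succ j → i.succ ≤ j)
       = Finset.univ.filter (fun i => ∀ j, e.SameCycle i j → i ≤ j) := by
    ext i
    simp only [Finset.mem_filter, Finset.mem_univ, true_and]
    constructor
    · intro h j hj
      exact Fin.succ_le_succ_iff.mp (h j.succ ((T1₀ e i j).mpr hj))
    · intro h j hj
      induction j using Fin.cases with
      | zero => exact absurd (sameCycle_fixed (p0_zero e) hj.symm) (Fin.succ_ne_zero i)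
      | succ j' => exact Fin.succ_le_succ_iff.mpr (h j' ((T1₀ e i j').mp hj))
  rw [hset]
  omega

lemma unique_min (e : Perm (Fin m)) (q : Fin m) :
    (Finset.univ.filter fun i => (∀ j, e.SameCycle i j → i ≤ j) ∧ e.SameCycle q i).card = 1 := by
  classical
  have hne : (Finset.univ.filter fun i => e.SameCycle q i).Nonempty :=
    ⟨q, by simp [Equiv.Perm.SameCycle.refl]⟩
  set μ := (Finset.univ.filter fun i => e.SameCycle q i).min' hne with hμ
  have hμmem : e.SameCycle q μ := by
    have := Finset.min'_mem _ hne
    simpa using this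
  have hμmin : ∀ j, e.SameCycle μ j → μ ≤ j := by
    intro j hj
    exact Finset.min'_le _ _ (by simpa using hμmem.trans hj)
  have : (Finset.univ.filter fun i => (∀ j, e.SameCycle i j → i ≤ j) ∧ e.SameCycle q i) = {μ} := by
    ext i
    simp only [Finset.mem_filter, Finset.mem_univ, true_and, Finset.mem_singleton]
    constructor
    · rintro ⟨hmin, hsc⟩
      exact le_antisymm (hmin μ (hsc.symm.trans hμmem)) (hμmin i (hμmem.symm.trans hsc))
    · rintro rfl
      exact ⟨hμmin, hμmem⟩
  rw [this, Finset.card_singleton]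

lemma cycS (e : Perm (Fin m)) (q : Fin m) : cyc (pS e q) = cyc e := by
  classical
  rw [cyc_eq_card_min, cyc_eq_card_min, card_filter_succ]
  rw [if_pos (fun j _ => Fin.zero_le j)]
  have hset : (Finset.univ.filter fun i : Fin m => ∀ j, (pS e q).SameCycle i.succ j → i.succ ≤ j)
      = Finset.univ.filter
          (fun i => (∀ j, e.SameCycle i j → i ≤ j) ∧ ¬ e.SameCycle q i) := by
    ext i
    simp only [Finset.mem_filter, Finset.mem_univ, true_and]
    constructor
    · intro h
      refine ⟨fun j hj => Fin.succ_le_succ_iff.mp (h j.succ ((T1 e q i j).mpr hj)), fun hsc => ?_⟩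
      have h0 : (pS e q).SameCycle i.succ 0 := ((T2 e q i).mpr hsc).symm
      have := h 0 h0
      exact absurd (Fin.le_zero_iff.mp this) (Fin.succ_ne_zero i)
    · rintro ⟨hmin, hnsc⟩ j hj
      induction j using Fin.cases with
      | zero => exact absurd ((T2 e q i).mp hj.symm) hnsc
      | succ j' => exact Fin.succ_le_succ_iff.mpr (hmin j' ((T1 e q i j').mp hj))
  rw [hset]
  have hsplit := Finset.card_filter_add_card_filter_not
    (s := Finset.univ.filter fun i => ∀ j, e.SameCycle i j → i ≤ j)
    (p := fun i => e.SameCycle q i)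
  rw [Finset.filter_filter, Finset.filter_filter] at hsplit
  have h1 : (Finset.univ.filter fun i =>
      (∀ j, e.SameCycle i j → i ≤ j) ∧ e.SameCycle q i).card = 1 := unique_min e q
  have h2 : (Finset.univ.filter fun a =>
      (∀ j, e.SameCycle a j → a ≤ j) ∧ ¬ e.SameCycle q a).card
      = (Finset.univ.filter fun i =>
      (∀ j, e.SameCycle i j → i ≤ j) ∧ ¬ e.SameCycle q i).card := rfl
  omega


lemma exc0 (e : Perm (Fin m)) : exc (p0 e) = exc e := by
  rw [exc, exc, card_filter_succ]
  have h0 : ¬ ((0 : Fin (m+1)) < p0 e 0) := by rw [p0_zero]; exact lt_irrefl _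
  rw [if_neg h0, zero_add]
  congr 1
  ext i
  simp only [Finset.mem_filter, Finset.mem_univ, true_and, p0_succ, Fin.succ_lt_succ_iff]

lemma exc_le (e : Perm (Fin m)) : exc e ≤ m := by
  rw [exc]
  calc _ ≤ (Finset.univ : Finset (Fin m)).card := Finset.card_filter_le _ _
  _ = m := by simp

lemma excS (e : Perm (Fin m)) (q : Fin m) :
    exc (pS e q) = if e.symm q < q then exc e else exc e + 1 := by
  classical
  rw [exc, exc, card_filter_succ]
  have h0 : ((0 : Fin (m+1)) < pS e q 0) := by rw [pS_zero]; exact Fin.succ_pos q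
  rw [if_pos h0]
  have hset : (Finset.univ.filter fun i : Fin m => i.succ < pS e q i.succ)
      = Finset.univ.filter fun i => i < e i ∧ ¬ e i = q := by
    ext i
    simp only [Finset.mem_filter, Finset.mem_univ, true_and, pS_succ]
    by_cases h : e i = q
    · simp only [h, if_pos rfl]
      constructor
      · intro hc; exact absurd (Fin.le_zero_iff.mp hc.le) (Fin.succ_ne_zero i)
      · tauto
    · simp only [if_neg h, Fin.succ_lt_succ_iff]
      tauto
  rw [hset]
  have hsplit := Finset.card_filter_add_card_filter_not
    (s := Finset.univ.filter fun i : Fin m => i < e i) (p := fun i => e i = q)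
  rw [Finset.filter_filter, Finset.filter_filter] at hsplit
  have hA : (Finset.univ.filter fun i => i < e i ∧ e i = q).card
      = if e.symm q < q then 1 else 0 := by
    by_cases h : e.symm q < q
    · rw [if_pos h]
      have : (Finset.univ.filter fun i => i < e i ∧ e i = q) = {e.symm q} := by
        ext i
        simp only [Finset.mem_filter, Finset.mem_univ, true_and, Finset.mem_singleton]
        constructor
        · rintro ⟨_, h2⟩; exact (Equiv.eq_symm_apply e).mpr h2
        · rintro rfl; exact ⟨by simpa using h, by simp⟩
      rw [this, Finset.card_singleton]
    · rw [if_neg h]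
      rw [Finset.card_eq_zero, Finset.filter_eq_empty_iff]
      rintro i - ⟨h1, h2⟩
      exact h (by simpa [← h2] using h1)
  by_cases h : e.symm q < q <;> simp only [h, if_pos, if_neg, if_true, if_false] at hA ⊢ <;> omega

lemma card_symm_lt (e : Perm (Fin m)) :
    (Finset.univ.filter fun q => e.symm q < q).card = exc e := by
  rw [exc]
  symm
  apply Finset.card_bij (fun i _ => e i)
  · intro i hi
    simp only [Finset.mem_filter, Finset.mem_univ, true_and] at *
    simpa using hi
  · intro i _ j _ h
    exact e.injective h
  · intro q hq
    simp only [Finset.mem_filter, Finset.mem_univ, true_and] at *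
    exact ⟨e.symm q, by simpa using hq, by simp⟩
open MvPolynomial

abbrev R2 : Type := MvPolynomial (Fin 2) ℤ
noncomputable def xx : R2 := X 0
noncomputable def yy : R2 := X 1
noncomputable def bb (h : ℕ) : R2 := (h+1 : ℕ) * xx + yy + (h : ℕ)
noncomputable def ll (h : ℕ) : R2 := (h : ℕ) * xx * (yy + (h : ℕ))
noncomputable def g : ℕ → ℕ → R2
  | 0, h => if h = 0 then 1 else 0
  | n+1, h => (match h with | 0 => 0 | h'+1 => g n h') + bb h * g n h + ll (h+1) * g n (h+1)

lemma g_zero : ∀ n h, n < h → g n h = 0 := by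
  intro n
  induction n with
  | zero => intro h hh; simp [g]; omega
  | succ n ih =>
    intro h hh
    match h, hh with
    | h'+1, hh =>
      simp only [g, ih h' (by omega), ih (h'+1) (by omega), ih (h'+2) (by omega)]
      ring

lemma g_diag : ∀ n, g n n = 1 := by
  intro n
  induction n with
  | zero => simp [g]
  | succ n ih =>
    show g (n+1) (n+1) = 1
    simp only [g, ih, g_zero n (n+1) (by omega), g_zero n (n+2) (by omega)]
    ring

lemma pd_natCast (n : ℕ) : pderiv (0 : Fin 2) (n : R2) = 0 := by
  rw [← (map_natCast (C : ℤ →+* R2) n : C (n:ℤ) = _), pderiv_C]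

lemma pd_xx : pderiv (0 : Fin 2) xx = 1 := by simp [xx]
lemma pd_yy : pderiv (0 : Fin 2) yy = 0 := by simp [yy]

lemma pd_bb (h : ℕ) : pderiv (0 : Fin 2) (bb h) = (h+1 : ℕ) := by
  simp [bb, pd_natCast, pd_xx, pd_yy]

lemma pd_ll (h : ℕ) : pderiv (0 : Fin 2) (ll h) = (h : ℕ) * (yy + (h : ℕ)) := by
  simp [ll, pderiv_mul, pd_natCast, pd_xx, pd_yy]; ring

lemma star : ∀ n h, (1 - xx) * (pderiv 0) (g n h) + (n : ℕ) * g n h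
    = (h : ℕ) * g n h + ((h+1 : ℕ) : R2) * (yy + ((h+1 : ℕ) : R2)) * g n (h+1) := by
  intro n
  induction n with
  | zero =>
    intro h
    match h with
    | 0 => simp [g, pderiv_one]
    | h+1 => simp [g]
  | succ n ih =>
    intro h
    match h with
    | 0 =>
      have e0 : g (n+1) 0 = 0 + bb 0 * g n 0 + ll 1 * g n 1 := rfl
      have e1 : g (n+1) 1 = g n 0 + bb 1 * g n 1 + ll 2 * g n 2 := rfl
      rw [e0, e1]
      have i0 := ih 0
      have i1 := ih 1
      simp only [map_add, map_zero, zero_add, pderiv_mul, pd_bb, pd_ll]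
      push_cast [bb, ll] at i0 i1 ⊢
      linear_combination (xx + yy) * i0 + (xx * (yy+1)) * i1
    | h+1 =>
      have e0 : g (n+1) (h+1) = g n h + bb (h+1) * g n (h+1) + ll (h+2) * g n (h+2) := rfl
      have e1 : g (n+1) (h+2) = g n (h+1) + bb (h+2) * g n (h+2) + ll (h+3) * g n (h+3) := rfl
      rw [e0, e1]
      have i0 := ih h
      have i1 := ih (h+1)
      have i2 := ih (h+2)
      simp only [map_add, map_zero, zero_add, pderiv_mul, pd_bb, pd_ll]
      push_cast [bb, ll] at i0 i1 i2 ⊢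
      linear_combination i0 + (((h:R2)+2)*xx + yy + ((h:R2)+1)) * i1 + (((h:R2)+2)*xx*(yy + ((h:R2)+2))) * i2


lemma per_e (a c mm : ℕ) (ha : a ≤ mm) :
    xx^a * yy^(c+1) + ((a • (xx^a * yy^c)) + (mm - a) • (xx^(a+1) * yy^c))
    = (yy + (mm : ℕ) * xx) * (xx^a * yy^c)
      + (1 - xx) * (xx * (pderiv 0) (xx^a * yy^c)) := by
  rw [pderiv_mul, pderiv_pow, pderiv_pow, pd_xx, pd_yy, nsmul_eq_mul, nsmul_eq_mul]
  match a with
  | 0 => push_cast [Nat.sub_zero]; ring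
  | a+1 =>
    have : a + 1 - 1 = a := rfl
    rw [this]
    push_cast [Nat.cast_sub ha]
    ring

lemma KEY1 (mm : ℕ) :
    SV (mm+1) = (yy + (mm : ℕ) * xx) * SV mm + (1 - xx) * (xx * (pderiv 0) (SV mm)) := by
  have hL : SV (mm+1) = ∑ e : Perm (Fin mm), ((xx ^ exc e * yy ^ (cyc e + 1))
      + ∑ q : Fin mm, xx ^ (if e.symm q < q then exc e else exc e + 1) * yy ^ cyc e) := by
    simp only [SV]
    rw [← Equiv.sum_comp (Equiv.Perm.decomposeFin.symm)
      (fun π => MvPolynomial.X 0 ^ exc π * MvPolynomial.X 1 ^ cyc π), Fintype.sum_prod_type,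
      Fin.sum_univ_succ]
    rw [Finset.sum_comm (γ := Fin mm)]
    rw [← Finset.sum_add_distrib]
    apply Finset.sum_congr rfl
    intro e _
    congr 1
    · show xx ^ exc (p0 e) * yy ^ cyc (p0 e) = _
      rw [exc0, cyc0]
    · apply Finset.sum_congr rfl
      intro q _
      show xx ^ exc (pS e q) * yy ^ cyc (pS e q) = _
      rw [excS, cycS]
  rw [hL]
  simp only [SV]
  rw [Finset.mul_sum, map_sum, Finset.mul_sum, Finset.mul_sum, ← Finset.sum_add_distrib]
  apply Finset.sum_congr rfl
  intro e _
  have hite : ∀ q : Fin mm, xx ^ (if e.symm q < q then exc e else exc e + 1) * yy ^ cyc e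
      = if e.symm q < q then xx ^ exc e * yy ^ cyc e else xx ^ (exc e + 1) * yy ^ cyc e := by
    intro q
    by_cases h : e.symm q < q <;> simp [h]
  rw [Finset.sum_congr rfl (fun q _ => hite q), Finset.sum_ite, Finset.sum_const,
    Finset.sum_const, card_symm_lt]
  have hcard : (Finset.univ.filter fun q : Fin mm => ¬ e.symm q < q).card = mm - exc e := by
    have := Finset.card_filter_add_card_filter_not
      (s := (Finset.univ : Finset (Fin mm))) (p := fun q => e.symm q < q)
    rw [card_symm_lt] at this
    simp only [Finset.card_univ, Fintype.card_fin] at this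
    omega
  rw [hcard]
  exact per_e (exc e) (cyc e) mm (exc_le e)

lemma bridge : ∀ n : ℕ, SV (n+1) = yy * g n 0 := by
  intro n
  induction n with
  | zero =>
    rw [SV, Fintype.sum_subsingleton _ (1 : Perm (Fin 1))]
    have h1 : exc (1 : Perm (Fin 1)) = 0 := by decide
    have h2 : cyc (1 : Perm (Fin 1)) = 1 := by decide
    rw [h1, h2]
    simp [g, yy]
  | succ n ih =>
    rw [KEY1 (n+1), ih]
    have e0 : g (n+1) 0 = 0 + bb 0 * g n 0 + ll 1 * g n 1 := rfl
    rw [e0, pderiv_mul, pd_yy]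
    have hst := star n 0
    push_cast [bb, ll] at hst ⊢
    linear_combination (yy * xx) * hst

-- The moment functional
noncomputable def LF : Polynomial R2 →ₗ[R2] R2 :=
  Polynomial.lsum (fun i => LinearMap.mulRight R2 (g i 0))

lemma LF_apply (p : Polynomial R2) : LF p = p.sum fun i a => a * g i 0 := rfl

lemma LF_monomial (k : ℕ) (c : R2) : LF (Polynomial.monomial k c) = c * g k 0 := by
  rw [LF_apply, Polynomial.sum_monomial_index]
  simp

lemma LF_X_pow (k : ℕ) : LF (Polynomial.X ^ k) = g k 0 := by
  have : (Polynomial.X ^ k : Polynomial R2) = Polynomial.monomial k 1 := by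
    rw [← Polynomial.C_mul_X_pow_eq_monomial, Polynomial.C_1, one_mul]
  rw [this, LF_monomial, one_mul]

lemma LF_C_mul (c : R2) (p : Polynomial R2) : LF (Polynomial.C c * p) = c * LF p := by
  rw [← Polynomial.smul_eq_C_mul, map_smul, smul_eq_mul]

noncomputable def Lam (m : ℕ) : R2 :=
  (m.factorial : R2) * xx ^ m * ∏ j ∈ Finset.Icc 1 m, (yy + (j : ℕ))

lemma Lam_zero : Lam 0 = 1 := by simp [Lam]

lemma Lam_succ (m : ℕ) : Lam (m+1) = Lam m * ll (m+1) := by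
  rw [Lam, Lam, ll, Finset.prod_Icc_succ_top (Nat.le_add_left 1 m)]
  push_cast [Nat.factorial_succ]
  ring

section Main
variable (T : ℕ → Polynomial R2)
  (hT0 : T 0 = 1)
  (hT1 : T 1 = Polynomial.X - Polynomial.C (MvPolynomial.X 0 + MvPolynomial.X 1))
  (hrec : ∀ n, 2 ≤ n → T n =
    (Polynomial.X - Polynomial.C ((n : R2) * MvPolynomial.X 0 +
        MvPolynomial.X 1 + (n : R2) - 1)) * T (n - 1) -
    Polynomial.C (((n : R2) - 1) * MvPolynomial.X 0 *
        (MvPolynomial.X 1 + (n : R2) - 1)) * T (n - 2))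

include hT0 hT1 hrec

lemma Trec' (m : ℕ) : T (m+2) =
    (Polynomial.X - Polynomial.C (bb (m+1))) * T (m+1) - Polynomial.C (ll (m+1)) * T m := by
  have e := hrec (m+2) (by omega)
  have hA : ((m+2 : ℕ) : R2) * MvPolynomial.X 0 + MvPolynomial.X 1 + ((m+2 : ℕ) : R2) - 1
      = bb (m+1) := by
    show _ = ((m+1+1 : ℕ) : R2) * xx + yy + ((m+1 : ℕ) : R2)
    push_cast [xx, yy]
    ring
  have hB : (((m+2 : ℕ) : R2) - 1) * MvPolynomial.X 0 * (MvPolynomial.X 1 + ((m+2 : ℕ) : R2) - 1)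
      = ll (m+1) := by
    show _ = ((m+1 : ℕ) : R2) * xx * (yy + ((m+1 : ℕ) : R2))
    push_cast [xx, yy]
    ring
  rw [hA, hB] at e
  exact e

lemma Lval : ∀ m n : ℕ, LF (T m * Polynomial.X ^ n) = Lam m * g n m := by
  intro m
  induction m using Nat.twoStepInduction with
  | zero =>
    intro n
    rw [hT0, one_mul, LF_X_pow, Lam_zero, one_mul]
  | one =>
    intro n
    have hsplit : T 1 * Polynomial.X ^ n
        = Polynomial.X ^ (n+1) - Polynomial.C (MvPolynomial.X 0 + MvPolynomial.X 1)
          * Polynomial.X ^ n := by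
      rw [hT1]; ring
    rw [hsplit, map_sub, LF_C_mul, LF_X_pow, LF_X_pow, Lam_succ, Lam_zero, one_mul]
    have e0 : g (n+1) 0 = 0 + bb 0 * g n 0 + ll 1 * g n 1 := rfl
    rw [e0]
    push_cast [bb, ll, xx, yy]
    ring
  | more m ih ih1 =>
    intro n
    have hsplit : T (m+2) * Polynomial.X ^ n
        = T (m+1) * Polynomial.X ^ (n+1)
          - Polynomial.C (bb (m+1)) * (T (m+1) * Polynomial.X ^ n)
          - Polynomial.C (ll (m+1)) * (T m * Polynomial.X ^ n) := by
      rw [Trec' T hT0 hT1 hrec m]; ring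
    rw [hsplit, map_sub, map_sub, LF_C_mul, LF_C_mul, ih, ih1, ih1]
    have erec : g (n+1) (m+1) = g n m + bb (m+1) * g n (m+1) + ll (m+2) * g n (m+2) := rfl
    rw [Lam_succ (m+1), Lam_succ m, erec]
    ring

lemma LT_mul (nn : ℕ) (p : Polynomial R2) :
    LF (T nn * p) = ∑ k ∈ p.support, p.coeff k * (Lam nn * g k nn) := by
  conv_lhs => rw [← Polynomial.sum_monomial_eq p]
  rw [Polynomial.sum_def, Finset.mul_sum, map_sum]
  apply Finset.sum_congr rfl
  intro k _
  rw [← Polynomial.C_mul_X_pow_eq_monomial, mul_left_comm, LF_C_mul,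
    Lval T hT0 hT1 hrec nn k]

lemma Tfacts : ∀ m, (T m).Monic ∧ (T m).natDegree = m := by
  intro m
  induction m using Nat.twoStepInduction with
  | zero => exact ⟨hT0 ▸ Polynomial.monic_one, hT0 ▸ Polynomial.natDegree_one⟩
  | one => exact ⟨hT1 ▸ Polynomial.monic_X_sub_C _, hT1 ▸ Polynomial.natDegree_X_sub_C _⟩
  | more m ih ih1 =>
    have h1 : ((Polynomial.X - Polynomial.C (bb (m+1))) * T (m+1)).Monic :=
      (Polynomial.monic_X_sub_C _).mul ih1.1
    have hd1 : ((Polynomial.X - Polynomial.C (bb (m+1))) * T (m+1)).natDegree = m + 2 := by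
      rw [(Polynomial.monic_X_sub_C _).natDegree_mul ih1.1, Polynomial.natDegree_X_sub_C, ih1.2]
      omega
    have hq : (Polynomial.C (ll (m+1)) * T m).degree
        < ((Polynomial.X - Polynomial.C (bb (m+1))) * T (m+1)).degree := by
      calc (Polynomial.C (ll (m+1)) * T m).degree
          ≤ ((Polynomial.C (ll (m+1)) * T m).natDegree : WithBot ℕ) :=
            Polynomial.degree_le_natDegree
        _ ≤ (m : WithBot ℕ) := by
            have : (Polynomial.C (ll (m+1)) * T m).natDegree ≤ m := by
              refine le_trans (Polynomial.natDegree_mul_le) ?_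
              rw [Polynomial.natDegree_C, ih.2]
              omega
            exact_mod_cast this
        _ < ((m+2 : ℕ) : WithBot ℕ) := by exact_mod_cast Nat.lt_succ_of_lt (Nat.lt_succ_self m)
        _ = _ := by rw [Polynomial.degree_eq_natDegree h1.ne_zero, hd1]
    constructor
    · rw [Trec' T hT0 hT1 hrec m]
      exact h1.sub_of_left hq
    · rw [Trec' T hT0 hT1 hrec m]
      rw [Polynomial.natDegree_eq_of_degree_eq (Polynomial.degree_sub_eq_left_of_degree_lt hq)]
      exact hd1

lemma orth_ne (m n : ℕ) (h : m < n) : LF (T m * T n) = 0 := by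
  rw [mul_comm, LT_mul T hT0 hT1 hrec]
  apply Finset.sum_eq_zero
  intro k hk
  have hle : k ≤ m := (Tfacts T hT0 hT1 hrec m).2 ▸ Polynomial.le_natDegree_of_mem_supp k hk
  rw [g_zero k n (by omega), mul_zero, mul_zero]

lemma orth_sq (n : ℕ) : LF (T n ^ 2) = Lam n := by
  rw [sq, LT_mul T hT0 hT1 hrec]
  have hmono := (Tfacts T hT0 hT1 hrec n).1
  have hdeg := (Tfacts T hT0 hT1 hrec n).2
  have hc : (T n).coeff n = 1 := by
    have h := hmono.coeff_natDegree
    rw [hdeg] at h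
    exact h
  rw [Finset.sum_eq_single_of_mem n]
  · rw [hc, g_diag, one_mul, mul_one]
  · rw [Polynomial.mem_support_iff, hc]
    exact one_ne_zero
  · intro k hk hkn
    have hle : k ≤ n := hdeg ▸ Polynomial.le_natDegree_of_mem_supp k hk
    rw [g_zero k n (by omega), mul_zero, mul_zero]

end Main


theorem stmt14 :
    (∀ n : ℕ, MvPolynomial.X 1 ∣ SV (n + 1)) ∧
    (∀ μ : ℕ → MvPolynomial (Fin 2) ℤ,
      (∀ n, MvPolynomial.X 1 * μ n = SV (n + 1)) →
      ∀ T : ℕ → Polynomial (MvPolynomial (Fin 2) ℤ),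
        T 0 = 1 →
        T 1 = Polynomial.X - Polynomial.C (MvPolynomial.X 0 + MvPolynomial.X 1) →
        (∀ n, 2 ≤ n → T n =
          (Polynomial.X - Polynomial.C ((n : MvPolynomial (Fin 2) ℤ) * MvPolynomial.X 0 +
              MvPolynomial.X 1 + (n : MvPolynomial (Fin 2) ℤ) - 1)) * T (n - 1) -
          Polynomial.C (((n : MvPolynomial (Fin 2) ℤ) - 1) * MvPolynomial.X 0 *
              (MvPolynomial.X 1 + (n : MvPolynomial (Fin 2) ℤ) - 1)) * T (n - 2)) →
        (∀ m n, m ≠ n → ((T m * T n).sum fun i a => a * μ i) = 0) ∧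
        (∀ n, ((T n ^ 2).sum fun i a => a * μ i) =
          (n.factorial : MvPolynomial (Fin 2) ℤ) * MvPolynomial.X 0 ^ n *
            ∏ j ∈ Finset.Icc 1 n,
              (MvPolynomial.X 1 + (j : MvPolynomial (Fin 2) ℤ)))) := by
  constructor
  · intro n
    exact ⟨g n 0, bridge n⟩
  · intro μ hμ T hT0 hT1 hrec
    have hμg : ∀ n, μ n = g n 0 := fun n =>
      mul_left_cancel₀ (MvPolynomial.X_ne_zero 1) ((hμ n).trans (bridge n))
    have hsum : ∀ p : Polynomial R2, (p.sum fun i a => a * μ i) = LF p := by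
      intro p
      rw [LF_apply, Polynomial.sum_def, Polynomial.sum_def]
      exact Finset.sum_congr rfl fun i _ => by rw [hμg i]
    constructor
    · intro m n hmn
      rw [hsum]
      rcases hmn.lt_or_gt with h | h
      · exact orth_ne T hT0 hT1 hrec m n h
      · rw [mul_comm]
        exact orth_ne T hT0 hT1 hrec n m h
    · intro n
      rw [hsum]
      exact (orth_sq T hT0 hT1 hrec n).trans rfl
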